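/- There exists a family of plaquettes (unit squares) of the lattice ℤ^d such that every edge of ℤ^d belongs to exactly one plaquette in the family. Explicitly, with π_j(x) = (−1)^{x_j} denoting the parity of the j-th coordinate of x ∈ ℤ^d, the family consisting of, for each site x and each j ∈ {1,...,d}, the plaquette with corner x spanned first by π_j(x)·e_j and then by −π_{j+1}(x)·e_{j+1} (indices mod d, with e_{d+1} := e_1), covers every edge exactly once. -/

import Mathlib

/-- The `j`-th standard unit vector in `ℤ^d`. -/
def unitVec (d : ℕ) (j : Fin d) : Fin d → ℤ := fun i => if i = j then 1 else 0

/-- The parity `π_j(x) = (-1)^{x_j}` of the `j`-th coordinate of `x ∈ ℤ^d`. -/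
def coordParity (d : ℕ) (x : Fin d → ℤ) (j : Fin d) : ℤ :=
  if Even (x j) then 1 else -1

/-- The plaquette `[u ⋄ v]_x`: the set of the four edges (unordered pairs of
nearest-neighbour sites) of the unit square with corner `x` and sides `u`, `v`. -/
def plaquette (d : ℕ) (x u v : Fin d → ℤ) : Set (Sym2 (Fin d → ℤ)) :=
  {s(x, x + u), s(x, x + v), s(x + u, x + u + v), s(x + v, x + u + v)}

/-- The plaquette specified by the parity instructions at site `x` in
direction `j`, namely `[π_j(x)·e_j ⋄ -π_{j+1}(x)·e_{j+1}]_x`. -/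
def instrPlaquette (d : ℕ) [NeZero d] (x : Fin d → ℤ) (j : Fin d) :
    Set (Sym2 (Fin d → ℤ)) :=
  plaquette d x (coordParity d x j • unitVec d j)
    (-(coordParity d x (j + 1)) • unitVec d (j + 1))

/-!
The plaquette selected at `(x, j)` lies in the `(e_j, e_{j+1})`-plane, and it is the same plaquette
whichever of its four corners it is selected from: stepping from `x` along `π_j(x) e_j` flips
`π_j` and keeps `π_{j+1}`, so the new first side is the old one reversed and the second side is
unchanged (similarly for the second side). Hence if the edge `{a, a + e_k}` lies in a selected
plaquette, that plaquette is also the one selected at `(a, j)`. At its corner `a` its two sides are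
`π_j(a) e_j` and `-π_{j+1}(a) e_{j+1}`; matching `e_k` forces `j = k` when `a_k` is even and
`j + 1 = k` when `a_k` is odd.
-/

variable {d : ℕ}

lemma plaquette_comm (x u v : Fin d → ℤ) : plaquette d x u v = plaquette d x v u := by
  ext e
  simp only [plaquette, add_right_comm x u v, Set.mem_insert_iff, Set.mem_singleton_iff]
  tauto

lemma plaquette_add_neg_left (x u v : Fin d → ℤ) :
    plaquette d (x + u) (-u) v = plaquette d x u v := by
  ext e
  simp only [plaquette, add_neg_cancel_right, Set.mem_insert_iff, Set.mem_singleton_iff]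
  rw [Sym2.eq_swap (a := x + u), Sym2.eq_swap (a := x + u + v)]
  tauto

lemma plaquette_add_neg_right (x u v : Fin d → ℤ) :
    plaquette d (x + v) u (-v) = plaquette d x u v := by
  rw [plaquette_comm, plaquette_add_neg_left, plaquette_comm]

lemma eq_or_eq_of_mem_plaquette_self {a u v w : Fin d → ℤ} (hu : u ≠ 0) (hv : v ≠ 0)
    (huv : u + v ≠ 0) (h : s(a, a + w) ∈ plaquette d a u v) : w = u ∨ w = v := by
  simpa [plaquette, Sym2.eq_iff, add_assoc, hu, hv, huv] using h

lemma left_corner_of_mem_plaquette {a b x u v : Fin d → ℤ} (h : s(a, b) ∈ plaquette d x u v) :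
    a = x ∨ a = x + u ∨ a = x + v ∨ a = x + u + v := by
  simp only [plaquette, Set.mem_insert_iff, Set.mem_singleton_iff, Sym2.eq_iff] at h
  tauto

lemma coordParity_ne_zero (x : Fin d → ℤ) (j : Fin d) : coordParity d x j ≠ 0 := by
  unfold coordParity; split_ifs <;> decide

lemma odd_coordParity (x : Fin d → ℤ) (j : Fin d) : Odd (coordParity d x j) := by
  unfold coordParity; split_ifs <;> decide

lemma coordParity_eq_one_iff (x : Fin d → ℤ) (j : Fin d) : coordParity d x j = 1 ↔ Even (x j) := by
  unfold coordParity; split_ifs with h <;> simp [h]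

lemma coordParity_add_smul_unitVec_of_ne (x : Fin d → ℤ) {i j : Fin d} (h : i ≠ j) (c : ℤ) :
    coordParity d (x + c • unitVec d j) i = coordParity d x i := by
  simp [coordParity, unitVec, h]

lemma coordParity_add_smul_unitVec_self (x : Fin d → ℤ) (j : Fin d) {c : ℤ} (hc : Odd c) :
    coordParity d (x + c • unitVec d j) j = -coordParity d x j := by
  by_cases h : Even (x j) <;>
    simp [coordParity, unitVec, h, Int.even_add, Int.not_even_iff_odd.mpr hc]

lemma smul_unitVec_eq_unitVec_iff {c : ℤ} {j k : Fin d} :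
    c • unitVec d j = unitVec d k ↔ j = k ∧ c = 1 := by
  refine ⟨fun h => ?_, fun ⟨hjk, hc⟩ => by rw [hjk, hc, one_smul]⟩
  have hk := congrFun h k
  by_cases hkj : k = j <;> simp_all [unitVec]

lemma smul_unitVec_ne_zero {c : ℤ} (hc : c ≠ 0) (j : Fin d) : c • unitVec d j ≠ 0 := by
  intro h; simpa [unitVec, hc] using congrFun h j

lemma Fin.add_one_ne_self_of_two_le [NeZero d] (hd : 2 ≤ d) (j : Fin d) : j + 1 ≠ j := by
  simp only [ne_eq, add_eq_left, Fin.one_eq_zero_iff]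
  omega

variable [NeZero d]

lemma instrPlaquette_add_first (hd : 2 ≤ d) (x : Fin d → ℤ) (j : Fin d) :
    instrPlaquette d (x + coordParity d x j • unitVec d j) j = instrPlaquette d x j := by
  unfold instrPlaquette
  rw [coordParity_add_smul_unitVec_self x j (odd_coordParity x j),
    coordParity_add_smul_unitVec_of_ne x (Fin.add_one_ne_self_of_two_le hd j), neg_smul,
    plaquette_add_neg_left]

lemma instrPlaquette_add_second (hd : 2 ≤ d) (x : Fin d → ℤ) (j : Fin d) :
    instrPlaquette d (x + -coordParity d x (j + 1) • unitVec d (j + 1)) j =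
      instrPlaquette d x j := by
  unfold instrPlaquette
  rw [coordParity_add_smul_unitVec_self x (j + 1) (odd_coordParity x (j + 1)).neg,
    coordParity_add_smul_unitVec_of_ne x (Fin.add_one_ne_self_of_two_le hd j).symm,
    neg_smul (-_), plaquette_add_neg_right]

lemma instrPlaquette_eq_of_mem (hd : 2 ≤ d) {a b x : Fin d → ℤ} {j : Fin d}
    (h : s(a, b) ∈ instrPlaquette d x j) : instrPlaquette d a j = instrPlaquette d x j := by
  have h_first := instrPlaquette_add_first hd x j
  have h_second := instrPlaquette_add_second hd x j
  have h_opposite : instrPlaquette d (x + coordParity d x j • unitVec d j +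
      -coordParity d x (j + 1) • unitVec d (j + 1)) j = instrPlaquette d x j := by
    rw [← coordParity_add_smul_unitVec_of_ne x (Fin.add_one_ne_self_of_two_le hd j),
      instrPlaquette_add_second hd, h_first]
  rcases left_corner_of_mem_plaquette h with rfl | rfl | rfl | rfl <;> first | rfl | assumption

/-- The edge `{a, a + e_k}` is the first side of the plaquette selected at `(a, k)` when `a_k` is
even, and the second side of the one selected at `(a, k - 1)` when `a_k` is odd. -/
def plaquetteDir (a : Fin d → ℤ) (k : Fin d) : Fin d :=
  if Even (a k) then k else k - 1

lemma edge_mem_instrPlaquette_plaquetteDir (a : Fin d → ℤ) (k : Fin d) :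
    s(a, a + unitVec d k) ∈ instrPlaquette d a (plaquetteDir a k) := by
  unfold plaquetteDir instrPlaquette plaquette
  split_ifs with h
  · rw [(coordParity_eq_one_iff a k).mpr h, one_smul]
    exact Set.mem_insert _ _
  · have : coordParity d a k = -1 := by simp [coordParity, h]
    rw [sub_add_cancel, this, neg_neg, one_smul]
    exact Set.mem_insert_of_mem _ (Set.mem_insert _ _)

lemma eq_plaquetteDir_of_mem_instrPlaquette_self (hd : 2 ≤ d) {a : Fin d → ℤ} {j k : Fin d}
    (h : s(a, a + unitVec d k) ∈ instrPlaquette d a j) : j = plaquetteDir a k := by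
  have hne := Fin.add_one_ne_self_of_two_le hd j
  have hsum :
      coordParity d a j • unitVec d j + -coordParity d a (j + 1) • unitVec d (j + 1) ≠ 0 := by
    intro h0
    simpa [unitVec, hne.symm, coordParity_ne_zero] using congrFun h0 j
  rcases eq_or_eq_of_mem_plaquette_self (smul_unitVec_ne_zero (coordParity_ne_zero a j) j)
    (smul_unitVec_ne_zero (neg_ne_zero.mpr (coordParity_ne_zero a (j + 1))) (j + 1)) hsum h
    with hk | hk <;> obtain ⟨rfl, hc⟩ := smul_unitVec_eq_unitVec_iff.mp hk.symm
  · simp [plaquetteDir, (coordParity_eq_one_iff a j).mp hc]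
  · have : ¬ Even (a (j + 1)) := by
      rw [← coordParity_eq_one_iff, neg_eq_iff_eq_neg.mp hc]; decide
    simp [plaquetteDir, this]

/-- The family of plaquettes selected by the parity instructions covers every
edge of `ℤ^d` exactly once: each nearest-neighbour edge `{a, a + e_k}` belongs
to exactly one plaquette of the family. -/
theorem plaquette_partition (d : ℕ) [NeZero d] (hd : 2 ≤ d)
    (a : Fin d → ℤ) (k : Fin d) :
    ∃! Q : Set (Sym2 (Fin d → ℤ)),
      (∃ (x : Fin d → ℤ) (j : Fin d), Q = instrPlaquette d x j) ∧
        s(a, a + unitVec d k) ∈ Q := by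
  refine ⟨instrPlaquette d a (plaquetteDir a k),
    ⟨⟨a, _, rfl⟩, edge_mem_instrPlaquette_plaquetteDir a k⟩, ?_⟩
  rintro Q ⟨⟨x, j, rfl⟩, hmem⟩
  have h_corner := instrPlaquette_eq_of_mem hd hmem
  rw [← h_corner] at hmem
  rw [← h_corner, eq_plaquetteDir_of_mem_instrPlaquette_self hd hmem]
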